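/- Let U be a nonempty open subset of ℝ^d, let (ω_0,ω_1) be a (θ,p)-admissible pair of weight functions on U for some θ ∈ (0,1) and p ∈ [1,∞), let β > 0, and let φ ∈ Lip_c(U). Then for each fixed z in the strip S = {z ∈ ℂ : 0 ≤ Re z ≤ 1}, the function x ↦ f^φ_{β,θ}(x,z) = e^{((z−θ)/p) log r_ω(x) + β(z−θ)²} φ(x) belongs to Lip_c(U), and consequently f^φ_{β,θ}(·,z) ∈ W_0^{1,p}(U,ω_0) ∩ W_0^{1,p}(U,ω_1). -/

import Mathlib

open MeasureTheory Filter Set Topology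

noncomputable section

/-- `ℝ^d` with the Euclidean norm. -/
abbrev Euc (d : ℕ) := EuclideanSpace ℝ (Fin d)

variable {d : ℕ}

/-- A weight function on `U`: Lebesgue measurable and strictly positive on `U`. -/
def IsWeight (U : Set (Euc d)) (ω : Euc d → ℝ) : Prop :=
  Measurable ω ∧ ∀ x ∈ U, 0 < ω x

/-- The compact boundedness condition:
`0 < inf_K ω ≤ sup_K ω < ∞` for every compact `K ⊆ U`. -/
def CompactBdd (U : Set (Euc d)) (ω : Euc d → ℝ) : Prop :=
  ∀ K : Set (Euc d), K ⊆ U → IsCompact K →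
    ∃ m M : ℝ, 0 < m ∧ ∀ x ∈ K, m ≤ ω x ∧ ω x ≤ M

/-- Locally Lipschitz on `U`: Lipschitz on every compact subset of `U`. -/
def LocLipschitzOn (U : Set (Euc d)) (f : Euc d → ℝ) : Prop :=
  ∀ K : Set (Euc d), K ⊆ U → IsCompact K → ∃ L : NNReal, LipschitzOnWith L f K

/-- A `C_c^∞` test function whose support is a compact subset of `U`. -/
def IsTestFun (U : Set (Euc d)) (ψ : Euc d → ℝ) : Prop :=
  ContDiff ℝ (⊤ : ℕ∞) ψ ∧ HasCompactSupport ψ ∧ tsupport ψ ⊆ U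

/-- `g` is a weak gradient of `φ` on `U` (in the sense of distributions):
`∫_U ∂_i ψ · φ = - ∫_U ψ · g_i` for every test function `ψ` on `U`. -/
def IsWeakGradOn (U : Set (Euc d)) (φ : Euc d → ℂ) (g : Euc d → Fin d → ℂ) : Prop :=
  LocallyIntegrableOn φ U ∧ (∀ i, LocallyIntegrableOn (fun x => g x i) U) ∧
  ∀ ψ : Euc d → ℝ, IsTestFun U ψ → ∀ i : Fin d,
    ∫ x in U, ((fderiv ℝ ψ x (EuclideanSpace.single i (1:ℝ)) : ℝ) : ℂ) * φ x
      = - ∫ x in U, ((ψ x : ℝ) : ℂ) * g x i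

/-- Membership in the weighted Lebesgue space `L^p(U,ω)` (scalar valued). -/
def MemLpW (p : ℝ) (U : Set (Euc d)) (ω : Euc d → ℝ) (f : Euc d → ℂ) : Prop :=
  AEMeasurable f (volume.restrict U) ∧
  IntegrableOn (fun x => ‖f x‖ ^ p * ω x) U

/-- The norm of the weighted Lebesgue space `L^p(U,ω)`. -/
def lpNormW (p : ℝ) (U : Set (Euc d)) (ω : Euc d → ℝ) (f : Euc d → ℂ) : ℝ :=
  (∫ x in U, ‖f x‖ ^ p * ω x) ^ (1 / p)

/-- Membership in the weighted Sobolev space `W^{1,p}(U,ω)`: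
`φ` has a weak gradient `g` on `U` and `(φ, g) ∈ L^p(U,ω,ℂ^{d+1})`. -/
def MemW1p (p : ℝ) (U : Set (Euc d)) (ω : Euc d → ℝ) (φ : Euc d → ℂ) : Prop :=
  ∃ g, IsWeakGradOn U φ g ∧ MemLpW p U ω φ ∧ ∀ i, MemLpW p U ω (fun x => g x i)

/-- The norm of the weighted Sobolev space `W^{1,p}(U,ω)`,
`‖φ‖ = (∫_U |φ|^p ω + ∑_i ∫_U |∂_i φ|^p ω)^{1/p}`
(expressed via an infimum over all weak gradients, which are a.e. unique). -/
def W1pNorm (p : ℝ) (U : Set (Euc d)) (ω : Euc d → ℝ) (φ : Euc d → ℂ) : ℝ :=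
  sInf { r : ℝ | ∃ g, IsWeakGradOn U φ g ∧
    r = ((∫ x in U, ‖φ x‖ ^ p * ω x) + ∑ i, ∫ x in U, ‖g x i‖ ^ p * ω x) ^ (1 / p) }

/-- `Lip_c(U)`: Lipschitz functions on `U` whose support has compact closure
contained in `U` (extended by zero off `U`). -/
def MemLipc (U : Set (Euc d)) (φ : Euc d → ℂ) : Prop :=
  (∃ L : NNReal, LipschitzOnWith L φ U) ∧
  (∀ x, x ∉ U → φ x = 0) ∧
  IsCompact (closure {x | x ∈ U ∧ φ x ≠ 0}) ∧
  closure {x | x ∈ U ∧ φ x ≠ 0} ⊆ U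

/-- `W_0^{1,p}(U,ω)`: the closure of `Lip_c(U)` in `W^{1,p}(U,ω)`. -/
def MemW1p0 (p : ℝ) (U : Set (Euc d)) (ω : Euc d → ℝ) (φ : Euc d → ℂ) : Prop :=
  MemW1p p U ω φ ∧
  ∀ ε : ℝ, 0 < ε → ∃ ψ, MemLipc U ψ ∧ W1pNorm p U ω (fun x => φ x - ψ x) < ε

/-- The interpolated weight `ω_θ = ω_0^{1-θ} ω_1^θ`. -/
def wtheta (θ : ℝ) (ω0 ω1 : Euc d → ℝ) : Euc d → ℝ :=
  fun x => ω0 x ^ (1 - θ) * ω1 x ^ θ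

/-- The ratio `r_ω = ω_0/ω_1`. -/
def rweight (ω0 ω1 : Euc d → ℝ) : Euc d → ℝ := fun x => ω0 x / ω1 x

open scoped Classical in
/-- A choice of weak gradient on `U` (zero if none exists). -/
def weakGrad (U : Set (Euc d)) (f : Euc d → ℂ) : Euc d → Fin d → ℂ :=
  if h : ∃ g, IsWeakGradOn U f g then Classical.choose h else 0

/-- The Euclidean norm of a vector in `ℂ^d`. -/
def vecNorm {d : ℕ} (v : Fin d → ℂ) : ℝ := Real.sqrt (∑ i, ‖v i‖ ^ 2)

/-- The function `x ↦ |∇ log r_ω(x)|` on `U`. -/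
def gradLogNorm (U : Set (Euc d)) (ω0 ω1 : Euc d → ℝ) : Euc d → ℝ :=
  fun x => vecNorm (weakGrad U (fun y => ((Real.log (rweight ω0 ω1 y) : ℝ) : ℂ)) x)

/-- Membership in `𝒲^p(U,θ,r_ω)`:
`φ ∈ W^{1,p}(U,ω_θ)` and `φ·|∇ log r_ω| ∈ L^p(U,ω_θ)`. -/
def MemWW (p θ : ℝ) (U : Set (Euc d)) (ω0 ω1 : Euc d → ℝ) (φ : Euc d → ℂ) : Prop :=
  MemW1p p U (wtheta θ ω0 ω1) φ ∧
  MemLpW p U (wtheta θ ω0 ω1) (fun x => ((gradLogNorm U ω0 ω1 x : ℝ) : ℂ) * φ x)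

/-- The norm of `𝒲^p(U,θ,r_ω)`. -/
def WWNorm (p θ : ℝ) (U : Set (Euc d)) (ω0 ω1 : Euc d → ℝ) (φ : Euc d → ℂ) : ℝ :=
  ((W1pNorm p U (wtheta θ ω0 ω1) φ) ^ p
    + ∫ x in U, ‖φ x‖ ^ p * gradLogNorm U ω0 ω1 x ^ p * wtheta θ ω0 ω1 x) ^ (1 / p)

/-- `𝒲_0^p(U,θ,r_ω)`: the closure of `Lip_c(U)` in `𝒲^p(U,θ,r_ω)`. -/
def MemWW0 (p θ : ℝ) (U : Set (Euc d)) (ω0 ω1 : Euc d → ℝ) (φ : Euc d → ℂ) : Prop :=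
  MemWW p θ U ω0 ω1 φ ∧
  ∀ ε : ℝ, 0 < ε → ∃ ψ, MemLipc U ψ ∧ WWNorm p θ U ω0 ω1 (fun x => φ x - ψ x) < ε

section Interp

variable {V : Type*} [AddCommGroup V] [Module ℂ V]

/-- The strip `S = {z : 0 ≤ Re z ≤ 1}`. -/
def strip : Set ℂ := {z | 0 ≤ z.re ∧ z.re ≤ 1}

/-- The sum `A_0 + A_1` of a couple of subspaces of the ambient space `V`. -/
def sumSet (S0 S1 : Set V) : Set V := {v | ∃ a ∈ S0, ∃ b ∈ S1, a + b = v}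

/-- The norm of `A_0 + A_1`:
`‖v‖ = inf {‖a‖_{A_0} + ‖b‖_{A_1} : a + b = v}`. -/
def sumNorm (S0 S1 : Set V) (N0 N1 : V → ℝ) (v : V) : ℝ :=
  sInf { r : ℝ | ∃ a ∈ S0, ∃ b ∈ S1, a + b = v ∧ r = N0 a + N1 b }

/-- Membership in Calderón's space `ℱ(A_0,A_1)` for the couple given by the
subsets `S0, S1` of `V` with norms `N0, N1`:  `f` maps the strip continuously
and boundedly into `A_0 + A_1`, is analytic in its interior, and maps the line
`Re z = j` continuously and boundedly into `A_j`. -/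
structure MemCalderon (S0 S1 : Set V) (N0 N1 : V → ℝ) (f : ℂ → V) : Prop where
  mem : ∀ z ∈ strip, f z ∈ sumSet S0 S1
  cont : ∀ z ∈ strip,
    Tendsto (fun w => sumNorm S0 S1 N0 N1 (f w - f z)) (nhdsWithin z strip) (nhds 0)
  bdd : ∃ M : ℝ, ∀ z ∈ strip, sumNorm S0 S1 N0 N1 (f z) ≤ M
  holo : ∀ z ∈ interior strip, ∃ L : V,
    Tendsto (fun w => sumNorm S0 S1 N0 N1 ((w - z)⁻¹ • (f w - f z) - L))
      (nhdsWithin z {z}ᶜ) (nhds 0)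
  mem0 : ∀ t : ℝ, f (t * Complex.I) ∈ S0
  cont0 : ∀ t : ℝ,
    Tendsto (fun s : ℝ => N0 (f (s * Complex.I) - f (t * Complex.I))) (nhds t) (nhds 0)
  bdd0 : ∃ M : ℝ, ∀ t : ℝ, N0 (f (t * Complex.I)) ≤ M
  mem1 : ∀ t : ℝ, f (1 + t * Complex.I) ∈ S1
  cont1 : ∀ t : ℝ,
    Tendsto (fun s : ℝ => N1 (f (1 + s * Complex.I) - f (1 + t * Complex.I))) (nhds t) (nhds 0)
  bdd1 : ∃ M : ℝ, ∀ t : ℝ, N1 (f (1 + t * Complex.I)) ≤ M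

/-- The norm of `ℱ(A_0,A_1)`. -/
def calderonNorm (N0 N1 : V → ℝ) (f : ℂ → V) : ℝ :=
  max (⨆ t : ℝ, N0 (f (t * Complex.I))) (⨆ t : ℝ, N1 (f (1 + t * Complex.I)))

/-- Membership in the complex interpolation space `[A_0,A_1]_θ`. -/
def MemInterp (S0 S1 : Set V) (N0 N1 : V → ℝ) (θ : ℝ) (v : V) : Prop :=
  ∃ f, MemCalderon S0 S1 N0 N1 f ∧ f (θ : ℂ) = v

/-- The norm of the complex interpolation space `[A_0,A_1]_θ`. -/
def InterpNorm (S0 S1 : Set V) (N0 N1 : V → ℝ) (θ : ℝ) (v : V) : ℝ :=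
  sInf { r : ℝ | ∃ f, MemCalderon S0 S1 N0 N1 f ∧ f (θ : ℂ) = v ∧ r = calderonNorm N0 N1 f }

/-- Completeness of a subspace `S` of `V` with respect to a norm functional `N`. -/
def IsCompleteOn (S : Set V) (N : V → ℝ) : Prop :=
  ∀ u : ℕ → V, (∀ n, u n ∈ S) →
    (∀ ε : ℝ, 0 < ε → ∃ n₀ : ℕ, ∀ m ≥ n₀, ∀ n ≥ n₀, N (u m - u n) < ε) →
    ∃ v ∈ S, Tendsto (fun n => N (u n - v)) atTop (nhds 0)

end Interp

/-- The underlying set of `W^{1,p}(U,ω)`. -/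
def W1pSet (p : ℝ) (U : Set (Euc d)) (ω : Euc d → ℝ) : Set (Euc d → ℂ) :=
  {φ | MemW1p p U ω φ}

/-- The underlying set of `W_0^{1,p}(U,ω)`. -/
def W1p0Set (p : ℝ) (U : Set (Euc d)) (ω : Euc d → ℝ) : Set (Euc d → ℂ) :=
  {φ | MemW1p0 p U ω φ}

end

noncomputable section

/-- `(ω0,ω1)` is a `(θ,p)`-admissible pair of weight functions on `U`:
`W^{1,p}(U,ω0)`, `W^{1,p}(U,ω1)` and `W^{1,p}(U,ω_θ)` are Banach spaces containing
`Lip_c(U)`, and `log r_ω` is locally Lipschitz on `U`. -/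
def AdmissiblePair (p θ : ℝ) {d : ℕ} (U : Set (Euc d)) (ω0 ω1 : Euc d → ℝ) : Prop :=
  IsCompleteOn (W1pSet p U ω0) (W1pNorm p U ω0) ∧
  IsCompleteOn (W1pSet p U ω1) (W1pNorm p U ω1) ∧
  IsCompleteOn (W1pSet p U (wtheta θ ω0 ω1)) (W1pNorm p U (wtheta θ ω0 ω1)) ∧
  (∀ φ : Euc d → ℂ, MemLipc U φ → MemW1p p U ω0 φ) ∧
  (∀ φ : Euc d → ℂ, MemLipc U φ → MemW1p p U ω1 φ) ∧
  (∀ φ : Euc d → ℂ, MemLipc U φ → MemW1p p U (wtheta θ ω0 ω1) φ) ∧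
  LocLipschitzOn U (fun x => Real.log (rweight ω0 ω1 x))

/-- The analytic family `f^φ_{β,θ}(x,z) = e^{((z−θ)/p) log r_ω(x) + β(z−θ)²} φ(x)`. -/
noncomputable def interpFun (p θ β : ℝ) {d : ℕ} (U : Set (Euc d)) (ω0 ω1 : Euc d → ℝ)
    (φ : Euc d → ℂ) (z : ℂ) : Euc d → ℂ :=
  fun x => Complex.exp (((z - (θ:ℂ)) / (p:ℂ)) * ((Real.log (rweight ω0 ω1 x) : ℝ) : ℂ)
    + (β:ℂ) * (z - (θ:ℂ)) ^ 2) * φ x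

private lemma expDiffBound {r : ℝ} {A B : ℂ} (hA : ‖A‖ ≤ r) (hB : ‖B‖ ≤ r) :
    ‖Complex.exp A - Complex.exp B‖ ≤ 2 * Real.exp r * ‖A - B‖ := by
  have hb : ∀ C : ℂ, ‖C‖ ≤ r → ‖Complex.exp C‖ ≤ Real.exp r := fun C hC => by
    rw [Complex.norm_exp]
    exact Real.exp_le_exp.2 ((Complex.re_le_norm C).trans hC)
  by_cases h : ‖A - B‖ ≤ 1
  · have key : Complex.exp A - Complex.exp B = Complex.exp B * (Complex.exp (A - B) - 1) := by
      rw [mul_sub, mul_one, ← Complex.exp_add]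
      congr 2
      ring
    rw [key, norm_mul]
    have h2 : ‖Complex.exp (A - B) - 1‖ ≤ 2 * ‖A - B‖ := by
      simpa using
        Complex.norm_exp_sub_one_le (x := A - B) (by simpa using h)
    calc ‖Complex.exp B‖ * ‖Complex.exp (A - B) - 1‖
        ≤ Real.exp r * (2 * ‖A - B‖) :=
          mul_le_mul (hb B hB) h2 (norm_nonneg _) (Real.exp_nonneg r)
      _ = 2 * Real.exp r * ‖A - B‖ := by ring
  · push_neg at h
    calc ‖Complex.exp A - Complex.exp B‖ ≤ ‖Complex.exp A‖ + ‖Complex.exp B‖ := norm_sub_le _ _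
      _ = 2 * Real.exp r * 1 - (2 * Real.exp r - ‖Complex.exp A‖ - ‖Complex.exp B‖) := by ring
      _ ≤ 2 * Real.exp r * ‖A - B‖ := by
          have h1 := hb A hA
          have h2 := hb B hB
          have h3 := Real.exp_nonneg r
          nlinarith

private lemma w1pNormSubSelfLt {d : ℕ} {U : Set (Euc d)} (hU : IsOpen U) {ω : Euc d → ℝ}
    (hω : ∀ x ∈ U, 0 < ω x) {p : ℝ} (hp : 1 ≤ p) (f : Euc d → ℂ) {ε : ℝ} (hε : 0 < ε) :
    W1pNorm p U ω (fun x => f x - f x) < ε := by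
  have hp0 : p ≠ 0 := by linarith
  have hfz : (fun x => f x - f x) = fun _ : Euc d => (0 : ℂ) := by
    funext x; exact sub_self _
  rw [hfz, W1pNorm]
  have hmem : (0:ℝ) ∈ {r : ℝ | ∃ g, IsWeakGradOn U (fun _ : Euc d => (0:ℂ)) g ∧
      r = ((∫ x in U, ‖(0:ℂ)‖ ^ p * ω x)
        + ∑ i, ∫ x in U, ‖g x i‖ ^ p * ω x) ^ (1 / p)} := by
    refine ⟨fun _ _ => 0, ⟨?_, ?_, ?_⟩, ?_⟩
    · exact (locallyIntegrable_const (0:ℂ)).locallyIntegrableOn U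
    · intro i; exact (locallyIntegrable_const (0:ℂ)).locallyIntegrableOn U
    · intro ψ hψ i; simp
    · simp only [norm_zero, Real.zero_rpow hp0, zero_mul, MeasureTheory.integral_zero,
        Finset.sum_const_zero, add_zero]
      rw [Real.zero_rpow (one_div_ne_zero hp0)]
  have hbdd : BddBelow {r : ℝ | ∃ g, IsWeakGradOn U (fun _ : Euc d => (0:ℂ)) g ∧
      r = ((∫ x in U, ‖(0:ℂ)‖ ^ p * ω x)
        + ∑ i, ∫ x in U, ‖g x i‖ ^ p * ω x) ^ (1 / p)} := by
    refine ⟨0, fun s hs => ?_⟩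
    obtain ⟨g, _, rfl⟩ := hs
    refine Real.rpow_nonneg (add_nonneg ?_ (Finset.sum_nonneg fun i _ => ?_)) _
    · exact MeasureTheory.setIntegral_nonneg hU.measurableSet fun x hx =>
        mul_nonneg (Real.rpow_nonneg (norm_nonneg _) p) (hω x hx).le
    · exact MeasureTheory.setIntegral_nonneg hU.measurableSet fun x hx =>
        mul_nonneg (Real.rpow_nonneg (norm_nonneg _) p) (hω x hx).le
  exact lt_of_le_of_lt (csInf_le hbdd hmem) hε

private lemma memW1p0_of_lipc {d : ℕ} {U : Set (Euc d)} (hU : IsOpen U) {ω : Euc d → ℝ}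
    (hω : ∀ x ∈ U, 0 < ω x) {p : ℝ} (hp : 1 ≤ p) {f : Euc d → ℂ}
    (hf : MemLipc U f) (hmem : MemW1p p U ω f) : MemW1p0 p U ω f :=
  ⟨hmem, fun ε hε => ⟨f, hf, w1pNormSubSelfLt hU hω hp f hε⟩⟩

/-- Lemma `lem:range` of the paper. If `(ω0,ω1)` is a
`(θ,p)`-admissible pair on `U`, `β > 0` and `φ ∈ Lip_c(U)`, then for each `z` in the
strip the function `x ↦ f^φ_{β,θ}(x,z)` belongs to `Lip_c(U)` and consequently to
`W_0^{1,p}(U,ω0) ∩ W_0^{1,p}(U,ω1)`. -/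
theorem stmt10 {d : ℕ} (U : Set (Euc d)) (ω0 ω1 : Euc d → ℝ) (p θ β : ℝ)
    (hU : IsOpen U) (hne : U.Nonempty)
    (hw0 : IsWeight U ω0) (hw1 : IsWeight U ω1)
    (hp : 1 ≤ p) (hθ : θ ∈ Set.Ioo (0:ℝ) 1) (hβ : 0 < β)
    (hadm : AdmissiblePair p θ U ω0 ω1)
    (φ : Euc d → ℂ) (hφ : MemLipc U φ) :
    ∀ z ∈ strip,
      MemLipc U (interpFun p θ β U ω0 ω1 φ z) ∧
      MemW1p0 p U ω0 (interpFun p θ β U ω0 ω1 φ z) ∧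
      MemW1p0 p U ω1 (interpFun p θ β U ω0 ω1 φ z) := by
  intro z _hz
  obtain ⟨⟨Lφ, hLφ⟩, hφ0, hKc, hKU⟩ := hφ
  set l : Euc d → ℝ := fun x => Real.log (rweight ω0 ω1 x) with hl
  set K : Set (Euc d) := closure {x | x ∈ U ∧ φ x ≠ 0} with hKdef
  obtain ⟨L0, hL0⟩ := hadm.2.2.2.2.2.2 K hKU hKc
  obtain ⟨R, hR⟩ := hKc.exists_bound_of_continuousOn hL0.continuousOn
  obtain ⟨Mφ, hMφ⟩ := hKc.exists_bound_of_continuousOn (hLφ.continuousOn.mono hKU)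
  set c : ℂ := (z - (θ:ℂ)) / (p:ℂ) with hc
  set b : ℂ := (β:ℂ) * (z - (θ:ℂ)) ^ 2 with hb
  set r : ℝ := ‖c‖ * max R 0 + ‖b‖ with hr
  set f : Euc d → ℂ := interpFun p θ β U ω0 ω1 φ z with hfdef
  have hfx : ∀ x, f x = Complex.exp (c * ((l x : ℝ) : ℂ) + b) * φ x := fun x => rfl
  have hAr : ∀ x ∈ K, ‖c * ((l x : ℝ) : ℂ) + b‖ ≤ r := by
    intro x hx
    calc ‖c * ((l x : ℝ) : ℂ) + b‖ ≤ ‖c * ((l x : ℝ) : ℂ)‖ + ‖b‖ := norm_add_le _ _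
      _ ≤ ‖c‖ * max R 0 + ‖b‖ := by
          rw [norm_mul, Complex.norm_real]
          gcongr
          exact le_max_of_le_left (hR x hx)
  have hE : ∀ x ∈ K, ‖Complex.exp (c * ((l x : ℝ) : ℂ) + b)‖ ≤ Real.exp r := by
    intro x hx
    rw [Complex.norm_exp]
    exact Real.exp_le_exp.2 ((Complex.re_le_norm _).trans (hAr x hx))
  have hφK : ∀ y, y ∈ U → y ∉ K → φ y = 0 := by
    intro y hyU hyK
    by_contra h
    exact hyK (subset_closure ⟨hyU, h⟩)
  set C : ℝ := Real.exp r * Lφ + 2 * Real.exp r * ‖c‖ * L0 * max Mφ 0 with hC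
  have hCnn : 0 ≤ C := by
    rw [hC]
    positivity
  have hstep : ∀ x ∈ U, x ∈ K → ∀ y ∈ U, ‖f x - f y‖ ≤ C * dist x y := by
    intro x hxU hxK y hyU
    have h1 : f x - f y = Complex.exp (c * ((l x : ℝ) : ℂ) + b) * (φ x - φ y)
        + (Complex.exp (c * ((l x : ℝ) : ℂ) + b)
            - Complex.exp (c * ((l y : ℝ) : ℂ) + b)) * φ y := by
      rw [hfx, hfx]; ring
    have hφd : ‖φ x - φ y‖ ≤ (Lφ : ℝ) * dist x y := by
      have := hLφ.dist_le_mul x hxU y hyU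
      rwa [dist_eq_norm] at this
    have hterm1 : ‖Complex.exp (c * ((l x : ℝ) : ℂ) + b) * (φ x - φ y)‖
        ≤ Real.exp r * ((Lφ : ℝ) * dist x y) := by
      rw [norm_mul]
      exact mul_le_mul (hE x hxK) hφd (norm_nonneg _) (Real.exp_nonneg r)
    have hterm2 : ‖(Complex.exp (c * ((l x : ℝ) : ℂ) + b)
          - Complex.exp (c * ((l y : ℝ) : ℂ) + b)) * φ y‖
        ≤ 2 * Real.exp r * ‖c‖ * (L0 : ℝ) * max Mφ 0 * dist x y := by
      by_cases hyK : y ∈ K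
      · rw [norm_mul]
        have hAd : ‖(c * ((l x : ℝ) : ℂ) + b) - (c * ((l y : ℝ) : ℂ) + b)‖
            ≤ ‖c‖ * ((L0 : ℝ) * dist x y) := by
          have h' : (c * ((l x : ℝ) : ℂ) + b) - (c * ((l y : ℝ) : ℂ) + b)
              = c * (((l x : ℝ) : ℂ) - ((l y : ℝ) : ℂ)) := by ring
          rw [h', norm_mul, ← Complex.ofReal_sub, Complex.norm_real]
          have hld := hL0.dist_le_mul x hxK y hyK
          rw [Real.dist_eq] at hld
          have : ‖l x - l y‖ = |l x - l y| := rfl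
          rw [this]
          exact mul_le_mul_of_nonneg_left hld (norm_nonneg c)
        have hEd : ‖Complex.exp (c * ((l x : ℝ) : ℂ) + b)
              - Complex.exp (c * ((l y : ℝ) : ℂ) + b)‖
            ≤ 2 * Real.exp r * (‖c‖ * ((L0 : ℝ) * dist x y)) := by
          refine (expDiffBound (hAr x hxK) (hAr y hyK)).trans ?_
          have h2er : (0:ℝ) ≤ 2 * Real.exp r := by positivity
          exact mul_le_mul_of_nonneg_left hAd h2er
        have hφy : ‖φ y‖ ≤ max Mφ 0 := le_max_of_le_left (hMφ y hyK)
        calc ‖Complex.exp (c * ((l x : ℝ) : ℂ) + b)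
              - Complex.exp (c * ((l y : ℝ) : ℂ) + b)‖ * ‖φ y‖
            ≤ (2 * Real.exp r * (‖c‖ * ((L0 : ℝ) * dist x y))) * max Mφ 0 :=
              mul_le_mul hEd hφy (norm_nonneg _) (by positivity)
          _ = 2 * Real.exp r * ‖c‖ * (L0 : ℝ) * max Mφ 0 * dist x y := by ring
      · rw [hφK y hyU hyK, mul_zero, norm_zero]
        positivity
    calc ‖f x - f y‖ ≤ ‖Complex.exp (c * ((l x : ℝ) : ℂ) + b) * (φ x - φ y)‖
          + ‖(Complex.exp (c * ((l x : ℝ) : ℂ) + b)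
              - Complex.exp (c * ((l y : ℝ) : ℂ) + b)) * φ y‖ := by
          rw [h1]; exact norm_add_le _ _
      _ ≤ Real.exp r * ((Lφ : ℝ) * dist x y)
          + 2 * Real.exp r * ‖c‖ * (L0 : ℝ) * max Mφ 0 * dist x y :=
            add_le_add hterm1 hterm2
      _ = C * dist x y := by rw [hC]; ring
  have hlip : ∀ x ∈ U, ∀ y ∈ U, dist (f x) (f y) ≤ C * dist x y := by
    intro x hxU y hyU
    rw [dist_eq_norm]
    by_cases hxK : x ∈ K
    · exact hstep x hxU hxK y hyU
    · by_cases hyK : y ∈ K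
      · rw [norm_sub_rev, dist_comm]
        exact hstep y hyU hyK x hxU
      · rw [hfx, hfx, hφK x hxU hxK, hφK y hyU hyK, mul_zero, mul_zero, sub_self, norm_zero]
        positivity
  have hset : {x | x ∈ U ∧ f x ≠ 0} = {x | x ∈ U ∧ φ x ≠ 0} := by
    ext x
    simp only [Set.mem_setOf_eq, hfx x, mul_ne_zero_iff]
    have := Complex.exp_ne_zero (c * ((l x : ℝ) : ℂ) + b)
    tauto
  have hmemLipc : MemLipc U f := by
    refine ⟨⟨C.toNNReal, LipschitzOnWith.of_dist_le' hlip⟩, ?_, ?_, ?_⟩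
    · intro x hx; rw [hfx, hφ0 x hx, mul_zero]
    · rw [hset]; exact hKc
    · rw [hset]; exact hKU
  exact ⟨hmemLipc,
    memW1p0_of_lipc hU hw0.2 hp hmemLipc (hadm.2.2.2.1 f hmemLipc),
    memW1p0_of_lipc hU hw1.2 hp hmemLipc (hadm.2.2.2.2.1 f hmemLipc)⟩

end
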